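/- arXiv:1306.5283 — 4 statements merged into one kernel-verified Lean document; each statement's English description precedes it below -/
import Mathlib

section
/- For every integer k there exists a planar graph G and a list assignment L with |L(v)| ≥ 2 for every vertex v, |L(u) ∩ L(v)| ≤ 1 and |L(u) ∪ L(v)| ≥ k for every edge uv, such that G admits no proper coloring from the lists. -/
open SimpleGraph

/-- A proper coloring of `G` from the list assignment `L`. -/
def ProperListColoring {V : Type*} (G : SimpleGraph V) (L : V → Finset ℕ) (φ : V → ℕ) : Prop :=
  (∀ v, φ v ∈ L v) ∧ ∀ ⦃u v⦄, G.Adj u v → φ u ≠ φ v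

/-- `G` is `(k,d)`-choosable. -/
def Choosable {V : Type*} (G : SimpleGraph V) (k d : ℕ) : Prop :=
  ∀ L : V → Finset ℕ, (∀ v, k ≤ (L v).card) →
    (∀ u v, G.Adj u v → (L u ∩ L v).card ≤ d) →
    ∃ φ, ProperListColoring G L φ

/-- `H` is a minor of `G`. -/
def HasMinor {V W : Type*} (G : SimpleGraph V) (H : SimpleGraph W) : Prop :=
  ∃ B : W → Set V, (∀ w, (B w).Nonempty) ∧
    (Pairwise fun w₁ w₂ => Disjoint (B w₁) (B w₂)) ∧
    (∀ w, (G.induce (B w)).Connected) ∧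
    ∀ ⦃w₁ w₂⦄, H.Adj w₁ w₂ → ∃ v₁ ∈ B w₁, ∃ v₂ ∈ B w₂, G.Adj v₁ v₂

/-- Planarity via Wagner's theorem: no `K₅` minor and no `K₃,₃` minor. -/
def IsPlanar {V : Type*} (G : SimpleGraph V) : Prop :=
  ¬ HasMinor G (⊤ : SimpleGraph (Fin 5)) ∧
  ¬ HasMinor G (completeBipartiteGraph (Fin 3) (Fin 3))

/-- At most two branch sets can meet the two hubs. -/
lemma hub_small {m : ℕ} {W : Type*} [Fintype W] [DecidableEq W]
    (B : W → Set (Bool ⊕ (Fin m × Fin m)))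
    (hdisj : Pairwise fun w₁ w₂ => Disjoint (B w₁) (B w₂)) :
    ∃ s : Finset W, s.card ≤ 2 ∧
      ∀ w ∉ s, Sum.inl false ∉ B w ∧ Sum.inl true ∉ B w := by
  classical
  refine ⟨Finset.univ.filter (fun w => Sum.inl false ∈ B w ∨ Sum.inl true ∈ B w), ?_, ?_⟩
  · have : (Finset.univ.filter
        (fun w => Sum.inl false ∈ B w ∨ Sum.inl true ∈ B w)).card ≤
        (Finset.univ : Finset Bool).card := by
      apply Finset.card_le_card_of_injOn (fun w => if Sum.inl false ∈ B w then true else false)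
      · intro w _; exact Finset.mem_univ _
      · intro w₁ h₁ w₂ h₂ he
        simp only [Finset.mem_coe, Finset.mem_filter] at h₁ h₂
        by_contra hne
        by_cases hf₁ : Sum.inl false ∈ B w₁ <;> by_cases hf₂ : Sum.inl false ∈ B w₂ <;>
          simp [hf₁, hf₂] at he
        · exact Set.disjoint_left.mp (hdisj hne) hf₁ hf₂
        · exact Set.disjoint_left.mp (hdisj hne) (h₁.2.resolve_left hf₁)
            (h₂.2.resolve_left hf₂)
    simpa using this
  · intro w hw
    simp only [Finset.mem_filter, Finset.mem_univ, true_and] at hw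
    exact ⟨fun h => hw (Or.inl h), fun h => hw (Or.inr h)⟩

lemma no_inr_edge {m : ℕ} (p q : Fin m × Fin m) :
    ¬ (completeBipartiteGraph Bool (Fin m × Fin m)).Adj (Sum.inr p) (Sum.inr q) := by
  simp

lemma not_inl {m : ℕ} {v : Bool ⊕ (Fin m × Fin m)}
    (h0 : v ≠ Sum.inl false) (h1 : v ≠ Sum.inl true) : ∃ p, v = Sum.inr p := by
  rcases v with b | p
  · cases b
    · exact absurd rfl h0
    · exact absurd rfl h1
  · exact ⟨p, rfl⟩

lemma planar_aux {m : ℕ} : IsPlanar (completeBipartiteGraph Bool (Fin m × Fin m)) := by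
  constructor
  · rintro ⟨B, -, hdisj, -, hadj⟩
    obtain ⟨s, hs2, hs⟩ := hub_small B hdisj
    have hcard : 1 < sᶜ.card := by
      have := Finset.card_compl s
      have : (5 : ℕ) - s.card ≤ sᶜ.card := by
        rw [Finset.card_compl]; simp
      omega
    obtain ⟨w₁, hw₁, w₂, hw₂, hne⟩ := Finset.one_lt_card.mp hcard
    rw [Finset.mem_compl] at hw₁ hw₂
    obtain ⟨v₁, hv₁, v₂, hv₂, he⟩ := hadj (show (⊤ : SimpleGraph (Fin 5)).Adj w₁ w₂ from hne)
    obtain ⟨h₁0, h₁1⟩ := hs w₁ hw₁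
    obtain ⟨h₂0, h₂1⟩ := hs w₂ hw₂
    obtain ⟨p, rfl⟩ := not_inl (fun h => h₁0 (h ▸ hv₁)) (fun h => h₁1 (h ▸ hv₁))
    obtain ⟨q, rfl⟩ := not_inl (fun h => h₂0 (h ▸ hv₂)) (fun h => h₂1 (h ▸ hv₂))
    exact no_inr_edge p q he
  · rintro ⟨B, -, hdisj, -, hadj⟩
    obtain ⟨s, hs2, hs⟩ := hub_small B hdisj
    have hl : ((Finset.univ.image (Sum.inl : Fin 3 → Fin 3 ⊕ Fin 3)) \ s).Nonempty := by
      rw [← Finset.card_pos]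
      have h3 : (Finset.univ.image (Sum.inl : Fin 3 → Fin 3 ⊕ Fin 3)).card = 3 := by
        rw [Finset.card_image_of_injective _ Sum.inl_injective]; simp
      have := Finset.le_card_sdiff s (Finset.univ.image (Sum.inl : Fin 3 → Fin 3 ⊕ Fin 3))
      omega
    have hr : ((Finset.univ.image (Sum.inr : Fin 3 → Fin 3 ⊕ Fin 3)) \ s).Nonempty := by
      rw [← Finset.card_pos]
      have h3 : (Finset.univ.image (Sum.inr : Fin 3 → Fin 3 ⊕ Fin 3)).card = 3 := by
        rw [Finset.card_image_of_injective _ Sum.inr_injective]; simp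
      have := Finset.le_card_sdiff s (Finset.univ.image (Sum.inr : Fin 3 → Fin 3 ⊕ Fin 3))
      omega
    obtain ⟨w₁, hw₁⟩ := hl
    obtain ⟨w₂, hw₂⟩ := hr
    rw [Finset.mem_sdiff] at hw₁ hw₂
    obtain ⟨i, -, rfl⟩ := Finset.mem_image.mp hw₁.1
    obtain ⟨j, -, rfl⟩ := Finset.mem_image.mp hw₂.1
    have hadj' : (completeBipartiteGraph (Fin 3) (Fin 3)).Adj (Sum.inl i) (Sum.inr j) := by
      simp
    obtain ⟨v₁, hv₁, v₂, hv₂, he⟩ := hadj hadj'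
    obtain ⟨h₁0, h₁1⟩ := hs _ hw₁.2
    obtain ⟨h₂0, h₂1⟩ := hs _ hw₂.2
    obtain ⟨p, rfl⟩ := not_inl (fun h => h₁0 (h ▸ hv₁)) (fun h => h₁1 (h ▸ hv₁))
    obtain ⟨q, rfl⟩ := not_inl (fun h => h₂0 (h ▸ hv₂)) (fun h => h₂1 (h ▸ hv₂))
    exact no_inr_edge p q he

theorem stmt_4 (k : ℕ) :
    ∃ (V : Type) (_ : Fintype V) (G : SimpleGraph V) (L : V → Finset ℕ),
      IsPlanar G ∧
      (∀ v, 2 ≤ (L v).card) ∧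
      (∀ u v, G.Adj u v → (L u ∩ L v).card ≤ 1 ∧ k ≤ (L u ∪ L v).card) ∧
      ¬ ∃ φ, ProperListColoring G L φ := by
  set m := k + 2 with hm
  refine ⟨Bool ⊕ (Fin m × Fin m), inferInstance,
    completeBipartiteGraph Bool (Fin m × Fin m),
    fun v => match v with
      | Sum.inl false => Finset.range m
      | Sum.inl true => (Finset.range m).image (· + m)
      | Sum.inr (i, j) => {(i : ℕ), m + (j : ℕ)}, planar_aux, ?_, ?_, ?_⟩
  · rintro (b | ⟨i, j⟩)
    · cases b <;> simp [Finset.card_image_of_injective _ (add_left_injective m)] <;> omega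
    · have : (i : ℕ) ≠ m + (j : ℕ) := by have := i.2; omega
      simp [Finset.card_insert_of_notMem, this]
  · -- edge conditions
    have key : ∀ (b : Bool) (i j : Fin m),
        ((match (Sum.inl b : Bool ⊕ (Fin m × Fin m)) with
          | Sum.inl false => Finset.range m
          | Sum.inl true => (Finset.range m).image (· + m)
          | Sum.inr (i, j) => {(i : ℕ), m + (j : ℕ)}) ∩ {(i : ℕ), m + (j : ℕ)}).card ≤ 1 ∧
        k ≤ ((match (Sum.inl b : Bool ⊕ (Fin m × Fin m)) with
          | Sum.inl false => Finset.range m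
          | Sum.inl true => (Finset.range m).image (· + m)
          | Sum.inr (i, j) => {(i : ℕ), m + (j : ℕ)}) ∪ {(i : ℕ), m + (j : ℕ)}).card := by
      intro b i j
      have hi := i.2
      have hj := j.2
      cases b
      · constructor
        · have : Finset.range m ∩ {(i : ℕ), m + (j : ℕ)} = {(i : ℕ)} := by
            ext a
            simp only [Finset.mem_inter, Finset.mem_range, Finset.mem_insert,
              Finset.mem_singleton]
            omega
          rw [this]; simp
        · calc k ≤ (Finset.range m).card := by simp; omega
            _ ≤ _ := Finset.card_le_card Finset.subset_union_left
      · constructor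
        · have : (Finset.range m).image (· + m) ∩ {(i : ℕ), m + (j : ℕ)} = {m + (j : ℕ)} := by
            ext a
            simp only [Finset.mem_inter, Finset.mem_image, Finset.mem_range, Finset.mem_insert,
              Finset.mem_singleton]
            constructor
            · rintro ⟨⟨x, hx, rfl⟩, h | h⟩ <;> omega
            · rintro rfl
              exact ⟨⟨j, hj, by omega⟩, Or.inr rfl⟩
          rw [this]; simp
        · have hc : k ≤ ((Finset.range m).image (· + m)).card := by
            rw [Finset.card_image_of_injective _ (add_left_injective m)]
            simp only [Finset.card_range]
            omega
          exact le_trans hc (Finset.card_le_card Finset.subset_union_left)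
    rintro (b₁ | ⟨i₁, j₁⟩) (b₂ | ⟨i₂, j₂⟩) hadj <;> simp at hadj
    · exact key b₁ i₂ j₂
    · have := key b₂ i₁ j₁
      rwa [Finset.inter_comm, Finset.union_comm] at this
  · -- no proper coloring
    rintro ⟨φ, hmem, hadj⟩
    have h0 := hmem (Sum.inl false)
    have h1 := hmem (Sum.inl true)
    simp only [Finset.mem_range, Finset.mem_image] at h0 h1
    obtain ⟨j, hj, hj'⟩ := h1
    have hx := hmem (Sum.inr (⟨φ (Sum.inl false), h0⟩, ⟨j, hj⟩))
    simp only [Finset.mem_insert, Finset.mem_singleton] at hx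
    have ha0 : φ (Sum.inl false) ≠ φ (Sum.inr (⟨φ (Sum.inl false), h0⟩, ⟨j, hj⟩)) :=
      hadj (by simp)
    have ha1 : φ (Sum.inl true) ≠ φ (Sum.inr (⟨φ (Sum.inl false), h0⟩, ⟨j, hj⟩)) :=
      hadj (by simp)
    rcases hx with h | h
    · exact ha0 h.symm
    · exact ha1 (by omega)
end

section
/- Let G be the complete bipartite graph with parts {a,b} and X, where |X| = (k−1)^2. Let L(a) = {a_1,...,a_{k−1}}, L(b) = {b_1,...,b_{k−1}} (with all colors a_i, b_j pairwise distinct), and let L assign to the vertices of X the (k−1)^2 distinct lists {a_i, b_j} for 1 ≤ i, j ≤ k−1. Then G admits no proper coloring from L. -/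
open SimpleGraph

theorem stmt_5 (k : ℕ) (a b : Fin (k - 1) → ℕ)
    (ha : Function.Injective a) (hb : Function.Injective b)
    (hab : ∀ i j, a i ≠ b j)
    (L : Fin 2 ⊕ (Fin (k - 1) × Fin (k - 1)) → Finset ℕ)
    (hLa : L (Sum.inl 0) = Finset.image a Finset.univ)
    (hLb : L (Sum.inl 1) = Finset.image b Finset.univ)
    (hLX : ∀ i j, L (Sum.inr (i, j)) = {a i, b j}) :
    ¬ ∃ φ, ProperListColoring
        (completeBipartiteGraph (Fin 2) (Fin (k - 1) × Fin (k - 1))) L φ := by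
  rintro ⟨φ, hmem, hadj⟩
  have hA := hmem (Sum.inl 0)
  have hB := hmem (Sum.inl 1)
  rw [hLa, Finset.mem_image] at hA
  rw [hLb, Finset.mem_image] at hB
  obtain ⟨i, -, hi⟩ := hA
  obtain ⟨j, -, hj⟩ := hB
  have hX := hmem (Sum.inr (i, j))
  rw [hLX, Finset.mem_insert, Finset.mem_singleton] at hX
  have h1 : (completeBipartiteGraph (Fin 2) (Fin (k - 1) × Fin (k - 1))).Adj
      (Sum.inl 0) (Sum.inr (i, j)) := by simp
  have h2 : (completeBipartiteGraph (Fin 2) (Fin (k - 1) × Fin (k - 1))).Adj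
      (Sum.inl 1) (Sum.inr (i, j)) := by simp
  rcases hX with h | h
  · exact hadj h1 (by rw [← hi, h])
  · exact hadj h2 (by rw [← hj, h])
end

section
/- Let G be a graph and L a list assignment such that: |L(x) ∩ L(y)| ≤ 1 for every edge xy, and for every vertex v either |L(v)| > deg(v), or there exist neighbors u, w of v with L(v) ∩ L(u) = L(v) ∩ L(w) and |L(v) ∩ L(u)| = 1. Suppose moreover that G is a minimal graph (with respect to subgraphs) admitting no proper L-coloring. Then for every vertex u, L(u) = ⋃_{v ∈ N(u)} (L(u) ∩ L(v)). -/
open SimpleGraph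

/-- A proper coloring of the subgraph `H` from the lists `L`, given as a total map. -/
def SubgraphProperColoring {V : Type*} {G : SimpleGraph V} (H : G.Subgraph)
    (L : V → Finset ℕ) (φ : V → ℕ) : Prop :=
  (∀ x ∈ H.verts, φ x ∈ L x) ∧ ∀ ⦃x y⦄, H.Adj x y → φ x ≠ φ y

/-! A colour of `L u` used on no neighbour of `u` in a colouring of `G - u` extends that colouring
to `G`; in a minimal non-colourable graph every colour of `L u` must therefore be shared with the
list of some neighbour. -/

namespace SimpleGraph

variable {V : Type*} {G : SimpleGraph V}

lemma Subgraph.deleteVerts_singleton_ne_top (u : V) :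
    (⊤ : G.Subgraph).deleteVerts {u} ≠ ⊤ := by
  intro h
  have hu : u ∈ ((⊤ : G.Subgraph).deleteVerts {u}).verts := by rw [h]; trivial
  simp at hu

lemma properListColoring_update_of_deleteVerts [DecidableEq V] {L : V → Finset ℕ} {φ : V → ℕ}
    {u : V} {c : ℕ} (hφ : SubgraphProperColoring ((⊤ : G.Subgraph).deleteVerts {u}) L φ)
    (hc : c ∈ L u) (hfree : ∀ v, G.Adj u v → φ v ≠ c) :
    ProperListColoring G L (Function.update φ u c) := by
  obtain ⟨hφL, hφAdj⟩ := hφ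
  refine ⟨fun v => ?_, fun x y hxy => ?_⟩
  · rcases eq_or_ne v u with rfl | hv
    · simpa using hc
    · simpa [Function.update_of_ne hv] using hφL v (by simp [hv])
  · rcases eq_or_ne x u with rfl | hx
    · simpa [Function.update_of_ne hxy.ne.symm] using (hfree y hxy).symm
    rcases eq_or_ne y u with rfl | hy
    · simpa [Function.update_of_ne hx] using hfree x hxy.symm
    simpa [Function.update_of_ne hx, Function.update_of_ne hy] using
      hφAdj (by simp [hx, hy, hxy])

end SimpleGraph

theorem stmt_13_general {V : Type*} [Fintype V] (G : SimpleGraph V) [DecidableRel G.Adj]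
    (L : V → Finset ℕ)
    (hG : ¬ ∃ φ, ProperListColoring G L φ)
    (hmin : ∀ H : G.Subgraph, H ≠ ⊤ → ∃ φ, SubgraphProperColoring H L φ) :
    ∀ u : V, L u = (G.neighborFinset u).biUnion (fun v => L u ∩ L v) := by
  classical
  intro u
  refine subset_antisymm (fun c hc => ?_) (Finset.biUnion_subset.2 fun _ _ => Finset.inter_subset_left)
  by_contra hshared
  simp only [Finset.mem_biUnion, mem_neighborFinset, Finset.mem_inter, not_exists, not_and] at hshared
  obtain ⟨φ, hφ⟩ := hmin _ (Subgraph.deleteVerts_singleton_ne_top u)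
  have hfree : ∀ v, G.Adj u v → φ v ≠ c := fun v huv hφc =>
    hshared v huv hc (hφc ▸ hφ.1 v (by simp [huv.ne.symm]))
  exact hG ⟨_, properListColoring_update_of_deleteVerts hφ hc hfree⟩

theorem stmt_13 {V : Type*} [Fintype V] (G : SimpleGraph V) [DecidableRel G.Adj]
    (L : V → Finset ℕ)
    (hsep : ∀ x y, G.Adj x y → (L x ∩ L y).card ≤ 1)
    (hdeg : ∀ v : V, G.degree v < (L v).card ∨
      ∃ u w, G.Adj v u ∧ G.Adj v w ∧ u ≠ w ∧
        L v ∩ L u = L v ∩ L w ∧ (L v ∩ L u).card = 1)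
    (hG : ¬ ∃ φ, ProperListColoring G L φ)
    (hmin : ∀ H : G.Subgraph, H ≠ ⊤ → ∃ φ, SubgraphProperColoring H L φ) :
    ∀ u : V, L u = (G.neighborFinset u).biUnion (fun v => L u ∩ L v) :=
  stmt_13_general G L hG hmin
end

section
/- Bipartite graphs need not be (2,1)-choosable: there exists a bipartite (indeed complete bipartite) graph G and a list assignment L with |L(v)| ≥ 2 for all v and |L(u) ∩ L(v)| ≤ 1 for every edge uv such that G has no proper coloring from L. -/
open SimpleGraph

def Lx : Fin 2 ⊕ Fin 4 → Finset ℕ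
  | .inl 0 => {1, 2}
  | .inl 1 => {3, 4}
  | .inr 0 => {1, 3}
  | .inr 1 => {1, 4}
  | .inr 2 => {2, 3}
  | .inr 3 => {2, 4}

theorem stmt_14 :
    ∃ (m n : ℕ) (L : Fin m ⊕ Fin n → Finset ℕ),
      (∀ v, 2 ≤ (L v).card) ∧
      (∀ u v, (completeBipartiteGraph (Fin m) (Fin n)).Adj u v →
        (L u ∩ L v).card ≤ 1) ∧
      ¬ ∃ φ, ProperListColoring (completeBipartiteGraph (Fin m) (Fin n)) L φ := by
  refine ⟨2, 4, Lx, by decide, fun u v h => (by decide : ∀ u v, u ≠ v → (Lx u ∩ Lx v).card ≤ 1) u v h.ne, ?_⟩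
  rintro ⟨φ, h1, h2⟩
  have hl0 := h1 (.inl 0)
  have hl1 := h1 (.inl 1)
  have adj : ∀ (i : Fin 2) (j : Fin 4),
      (completeBipartiteGraph (Fin 2) (Fin 4)).Adj (.inl i) (.inr j) := by
    intro i j; simp
  simp only [Lx, Finset.mem_insert, Finset.mem_singleton] at hl0 hl1
  rcases hl0 with h0 | h0 <;> rcases hl1 with h3 | h3
  · have hr := h1 (.inr 0)
    simp only [Lx, Finset.mem_insert, Finset.mem_singleton] at hr
    rcases hr with hr | hr
    · exact h2 (adj 0 0) (h0.trans hr.symm)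
    · exact h2 (adj 1 0) (h3.trans hr.symm)
  · have hr := h1 (.inr 1)
    simp only [Lx, Finset.mem_insert, Finset.mem_singleton] at hr
    rcases hr with hr | hr
    · exact h2 (adj 0 1) (h0.trans hr.symm)
    · exact h2 (adj 1 1) (h3.trans hr.symm)
  · have hr := h1 (.inr 2)
    simp only [Lx, Finset.mem_insert, Finset.mem_singleton] at hr
    rcases hr with hr | hr
    · exact h2 (adj 0 2) (h0.trans hr.symm)
    · exact h2 (adj 1 2) (h3.trans hr.symm)
  · have hr := h1 (.inr 3)
    simp only [Lx, Finset.mem_insert, Finset.mem_singleton] at hr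
    rcases hr with hr | hr
    · exact h2 (adj 0 3) (h0.trans hr.symm)
    · exact h2 (adj 1 3) (h3.trans hr.symm)
end
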